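/- arXiv:1109.6259 — 3 statements merged into one kernel-verified Lean document; each statement's English description precedes it below -/
import Mathlib

section
/- Let K ∈ 𝔹^{n_u×n_y} and G ∈ 𝔹^{n_y×n_u} be Boolean matrices, and define the sequence Z_0 = K, Z_{m+1} = Z_m + Z_m G Z_m (Boolean matrix operations). Then for all m ∈ ℕ, Z_m = Σ_{s=0}^{2^m − 1} K (G K)^s. -/
/-- Boolean (OR/AND semiring) matrix multiplication. -/
noncomputable def bmul {a b c : ℕ} (X : Matrix (Fin a) (Fin b) Bool) (Y : Matrix (Fin b) (Fin c) Bool) :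
    Matrix (Fin a) (Fin c) Bool :=
  fun i k => Finset.univ.sup fun j => X i j && Y j k

/-- Entrywise Boolean (OR) addition of matrices. -/
def badd {a b : ℕ} (X Y : Matrix (Fin a) (Fin b) Bool) : Matrix (Fin a) (Fin b) Bool :=
  fun i j => X i j || Y i j

/-- The sequence Z_0 = K, Z_{m+1} = Z_m + Z_m G Z_m. -/
noncomputable def Zseq {nu ny : ℕ} (K : Matrix (Fin nu) (Fin ny) Bool) (G : Matrix (Fin ny) (Fin nu) Bool) :
    ℕ → Matrix (Fin nu) (Fin ny) Bool
  | 0 => K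
  | m + 1 => badd (Zseq K G m) (bmul (bmul (Zseq K G m) G) (Zseq K G m))

/-- kterm K G s = K (G K)^s in the Boolean semiring. -/
noncomputable def kterm {nu ny : ℕ} (K : Matrix (Fin nu) (Fin ny) Bool) (G : Matrix (Fin ny) (Fin nu) Bool) :
    ℕ → Matrix (Fin nu) (Fin ny) Bool
  | 0 => K
  | s + 1 => bmul (kterm K G s) (bmul G K)

/-- Boolean (OR) sum of the matrices f 0, ..., f (N-1). -/
noncomputable def bsum {a b : ℕ} (N : ℕ) (f : ℕ → Matrix (Fin a) (Fin b) Bool) :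
    Matrix (Fin a) (Fin b) Bool :=
  fun i j => (Finset.range N).sup fun s => f s i j

/-- Number of nonzero (true) entries. -/
def ncount {a b : ℕ} (Z : Matrix (Fin a) (Fin b) Bool) : ℕ :=
  ∑ i : Fin a, ∑ j : Fin b, if Z i j then 1 else 0

theorem Finset.sup_eq_true_iff {α : Type*} (s : Finset α) (f : α → Bool) :
    s.sup f = true ↔ ∃ a ∈ s, f a = true := by
  induction s using Finset.cons_induction with
  | empty => simp
  | cons a s _ ih => simp [Finset.sup_cons, ih]

section BoolMatrix

variable {a b c d : ℕ}

theorem bmul_apply_eq_true (X : Matrix (Fin a) (Fin b) Bool) (Y : Matrix (Fin b) (Fin c) Bool)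
    (i : Fin a) (k : Fin c) : bmul X Y i k = true ↔ ∃ j, X i j = true ∧ Y j k = true := by
  simp [bmul, Finset.sup_eq_true_iff]

theorem badd_apply_eq_true (X Y : Matrix (Fin a) (Fin b) Bool) (i : Fin a) (j : Fin b) :
    badd X Y i j = true ↔ X i j = true ∨ Y i j = true := by
  simp [badd]

theorem bsum_apply_eq_true (N : ℕ) (f : ℕ → Matrix (Fin a) (Fin b) Bool) (i : Fin a) (j : Fin b) :
    bsum N f i j = true ↔ ∃ s < N, f s i j = true := by
  simp [bsum, Finset.sup_eq_true_iff]

theorem bmul_assoc (X : Matrix (Fin a) (Fin b) Bool) (Y : Matrix (Fin b) (Fin c) Bool)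
    (Z : Matrix (Fin c) (Fin d) Bool) : bmul (bmul X Y) Z = bmul X (bmul Y Z) := by
  ext i l
  rw [Bool.eq_iff_iff]
  simp only [bmul_apply_eq_true]
  grind

theorem bmul_bsum_bsum_apply_eq_true (N M : ℕ) (f : ℕ → Matrix (Fin a) (Fin b) Bool)
    (Y : Matrix (Fin b) (Fin c) Bool) (g : ℕ → Matrix (Fin c) (Fin d) Bool) (i : Fin a) (l : Fin d) :
    bmul (bmul (bsum N f) Y) (bsum M g) i l = true ↔
      ∃ s < N, ∃ t < M, bmul (bmul (f s) Y) (g t) i l = true := by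
  simp only [bmul_apply_eq_true, bsum_apply_eq_true]
  constructor
  · rintro ⟨k, ⟨j, ⟨s, hs, hf⟩, hY⟩, t, ht, hg⟩
    exact ⟨s, hs, t, ht, k, ⟨j, hf, hY⟩, hg⟩
  · rintro ⟨s, hs, t, ht, k, ⟨j, hf, hY⟩, hg⟩
    exact ⟨k, ⟨j, ⟨s, hs, hf⟩, hY⟩, t, ht, hg⟩

end BoolMatrix

section Kleene

variable {nu ny : ℕ} (K : Matrix (Fin nu) (Fin ny) Bool) (G : Matrix (Fin ny) (Fin nu) Bool)

theorem kterm_add_add_one (s t : ℕ) :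
    kterm K G (s + t + 1) = bmul (bmul (kterm K G s) G) (kterm K G t) := by
  induction t with
  | zero => simp only [kterm, bmul_assoc]
  | succ t ih => rw [← Nat.add_assoc, kterm, ih, kterm, bmul_assoc, bmul_assoc]

/-- The product term contributes exactly the exponents `s + t + 1` with `s, t < N`; together with
the exponents below `N` these fill `[0, 2 * N)`. -/
theorem bsum_two_mul_kterm (N : ℕ) :
    bsum (2 * N) (kterm K G) =
      badd (bsum N (kterm K G)) (bmul (bmul (bsum N (kterm K G)) G) (bsum N (kterm K G))) := by
  ext i j
  rw [Bool.eq_iff_iff, badd_apply_eq_true, bmul_bsum_bsum_apply_eq_true, bsum_apply_eq_true,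
    bsum_apply_eq_true]
  simp only [← kterm_add_add_one]
  constructor
  · rintro ⟨u, hu, h⟩
    by_cases hlow : u < N
    · exact Or.inl ⟨u, hlow, h⟩
    · refine Or.inr ⟨N - 1, by omega, u - N, by omega, ?_⟩
      rwa [show N - 1 + (u - N) + 1 = u by omega]
  · rintro (⟨s, hs, h⟩ | ⟨s, hs, t, ht, h⟩)
    · exact ⟨s, by omega, h⟩
    · exact ⟨s + t + 1, by omega, h⟩

end Kleene

theorem stmt3 {nu ny : ℕ} (K : Matrix (Fin nu) (Fin ny) Bool)
    (G : Matrix (Fin ny) (Fin nu) Bool) :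
    ∀ m : ℕ, Zseq K G m = bsum (2 ^ m) (kterm K G) := by
  intro m
  induction m with
  | zero =>
    ext i j
    simp [Zseq, bsum, kterm]
  | succ m ih => rw [Zseq, ih, pow_succ', bsum_two_mul_kterm]
end

section
/- Let K ∈ 𝔹^{n_u×n_y}, G ∈ 𝔹^{n_y×n_u}, and define Z_0 = K, Z_{m+1} = Z_m + Z_m G Z_m (Boolean operations). If Z_{m*} = Z_{m*+1} for some m*, then Z_{m*} satisfies Z_{m*} G Z_{m*} ≤ Z_{m*} and K ≤ Z_{m*}, and moreover Z_{m*} ≤ Z for every Z ∈ 𝔹^{n_u×n_y} with Z G Z ≤ Z and K ≤ Z. In particular Z_{m*} is the unique minimal such matrix. -/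
section BooleanMatrix

variable {a b c : ℕ}

lemma le_badd_left (X Y : Matrix (Fin a) (Fin b) Bool) (i : Fin a) (j : Fin b) :
    X i j ≤ badd X Y i j :=
  le_sup_left

lemma le_badd_right (X Y : Matrix (Fin a) (Fin b) Bool) (i : Fin a) (j : Fin b) :
    Y i j ≤ badd X Y i j :=
  le_sup_right

lemma badd_le {X Y Z : Matrix (Fin a) (Fin b) Bool} {i : Fin a} {j : Fin b}
    (hX : X i j ≤ Z i j) (hY : Y i j ≤ Z i j) : badd X Y i j ≤ Z i j :=
  sup_le hX hY

lemma bmul_mono {X X' : Matrix (Fin a) (Fin b) Bool} {Y Y' : Matrix (Fin b) (Fin c) Bool}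
    (hX : ∀ i j, X i j ≤ X' i j) (hY : ∀ i j, Y i j ≤ Y' i j) (i : Fin a) (k : Fin c) :
    bmul X Y i k ≤ bmul X' Y' i k :=
  Finset.sup_mono_fun fun j _ => inf_le_inf (hX i j) (hY j k)

end BooleanMatrix

section Zseq

variable {nu ny : ℕ} (K : Matrix (Fin nu) (Fin ny) Bool) (G : Matrix (Fin ny) (Fin nu) Bool)

lemma le_Zseq (m : ℕ) (i : Fin nu) (j : Fin ny) : K i j ≤ Zseq K G m i j := by
  induction m with
  | zero => exact le_rfl
  | succ m ih => exact ih.trans (le_badd_left _ _ i j)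

lemma Zseq_le_of_closed {Z : Matrix (Fin nu) (Fin ny) Bool}
    (hZG : ∀ i j, bmul (bmul Z G) Z i j ≤ Z i j) (hKZ : ∀ i j, K i j ≤ Z i j) (m : ℕ) :
    ∀ i j, Zseq K G m i j ≤ Z i j := by
  induction m with
  | zero => exact hKZ
  | succ m ih =>
    exact fun i j =>
      badd_le (ih i j) ((bmul_mono (bmul_mono ih fun _ _ => le_rfl) ih i j).trans (hZG i j))

lemma closed_Zseq_of_eq_succ {m : ℕ} (h : Zseq K G m = Zseq K G (m + 1))
    (i : Fin nu) (j : Fin ny) :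
    bmul (bmul (Zseq K G m) G) (Zseq K G m) i j ≤ Zseq K G m i j :=
  (le_badd_right _ _ i j).trans_eq (congrFun (congrFun h i) j).symm

end Zseq

theorem stmt6 {nu ny : ℕ} (K : Matrix (Fin nu) (Fin ny) Bool)
    (G : Matrix (Fin ny) (Fin nu) Bool) (mstar : ℕ)
    (h : Zseq K G mstar = Zseq K G (mstar + 1)) :
    (∀ i j, bmul (bmul (Zseq K G mstar) G) (Zseq K G mstar) i j ≤ Zseq K G mstar i j) ∧
    (∀ i j, K i j ≤ Zseq K G mstar i j) ∧
    (∀ Z : Matrix (Fin nu) (Fin ny) Bool,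
      (∀ i j, bmul (bmul Z G) Z i j ≤ Z i j) → (∀ i j, K i j ≤ Z i j) →
      ∀ i j, Zseq K G mstar i j ≤ Z i j) :=
  ⟨closed_Zseq_of_eq_succ K G h, le_Zseq K G mstar,
    fun _ hZG hKZ => Zseq_le_of_closed K G hZG hKZ mstar⟩
end

section
/- The closure Z* := Σ_{s=0}^{n−1} K(GK)^s (Boolean sum, n = min(n_u,n_y)) satisfies Z* G Z* ≤ Z*; that is, the finite Boolean geometric sum is quadratically invariant. -/
def RelWalk {α : Type*} (r : α → α → Prop) (m : ℕ) (a b : α) : Prop :=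
  ∃ f : ℕ → α, f 0 = a ∧ f m = b ∧ ∀ k < m, r (f k) (f (k + 1))

namespace RelWalk

variable {α : Type*} {r : α → α → Prop}

theorem zero_iff {a b : α} : RelWalk r 0 a b ↔ a = b :=
  ⟨fun ⟨_, h0, hm, _⟩ => h0 ▸ hm,
    fun h => ⟨fun _ => a, rfl, h, fun _ h => absurd h (Nat.not_lt_zero _)⟩⟩

theorem of_segment {m : ℕ} {f : ℕ → α} (hf : ∀ k < m, r (f k) (f (k + 1))) {p q : ℕ}
    (hpq : p ≤ q) (hq : q ≤ m) : RelWalk r (q - p) (f p) (f q) :=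
  ⟨fun k => f (p + k), rfl, by simp only [Nat.add_sub_cancel' hpq],
    fun k hk => hf (p + k) (by omega)⟩

theorem add_iff {m n : ℕ} {a c : α} :
    RelWalk r (m + n) a c ↔ ∃ b, RelWalk r m a b ∧ RelWalk r n b c := by
  constructor
  · rintro ⟨f, rfl, rfl, hf⟩
    refine ⟨f m, ?_, ?_⟩
    · simpa using of_segment hf (Nat.zero_le m) (Nat.le_add_right m n)
    · simpa using of_segment hf (Nat.le_add_right m n) le_rfl
  · rintro ⟨b, ⟨f, rfl, rfl, hf⟩, ⟨g, hg0, rfl, hg⟩⟩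
    refine ⟨fun k => if k ≤ m then f k else g (k - m), by simp, ?_, fun k hk => ?_⟩
    · dsimp only
      split_ifs with h
      · obtain rfl : n = 0 := by omega
        exact hg0.symm
      · simp
    rcases lt_trichotomy k m with h | rfl | h
    · simpa [h.le, Nat.succ_le_of_lt h] using hf k h
    · simpa [hg0] using hg 0 (by omega)
    · simpa [h.not_ge, (h.trans (Nat.lt_succ_self k)).not_ge, Nat.sub_add_comm h.le]
        using hg (k - m) (by omega)

theorem one_iff {a b : α} : RelWalk r 1 a b ↔ r a b :=
  ⟨fun ⟨f, h0, h1, hf⟩ => h0 ▸ h1 ▸ hf 0 Nat.one_pos,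
    fun h => ⟨fun k => if k = 0 then a else b, rfl, rfl,
      fun k hk => by simpa [Nat.lt_one_iff.mp hk]⟩⟩

theorem succ_iff {m : ℕ} {a c : α} : RelWalk r (m + 1) a c ↔ ∃ b, RelWalk r m a b ∧ r b c := by
  simp only [add_iff, one_iff]

theorem exists_lt_card [Fintype α] {m : ℕ} {a b : α} (h : RelWalk r m a b) :
    ∃ k < Fintype.card α, RelWalk r k a b := by
  induction m using Nat.strong_induction_on with
  | _ m ih =>
    by_cases hm : m < Fintype.card α
    · exact ⟨m, hm, h⟩
    obtain ⟨f, rfl, rfl, hf⟩ := h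
    obtain ⟨p, q, hpq, hfpq⟩ := Fintype.exists_ne_map_eq_of_card_lt (fun k : Fin (m + 1) => f k)
      (by simpa using hm)
    wlog hlt : (p : ℕ) < q generalizing p q
    · exact this q p hpq.symm hfpq.symm
        (lt_of_le_of_ne (not_lt.mp hlt) (Fin.val_injective.ne hpq.symm))
    have hqm : (q : ℕ) ≤ m := Nat.lt_succ_iff.mp q.isLt
    have hshort : RelWalk r (p + (m - q)) (f 0) (f m) := by
      refine add_iff.mpr ⟨f p, ?_, ?_⟩
      · simpa using of_segment hf (Nat.zero_le p) (hlt.le.trans hqm)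
      · simpa [hfpq] using of_segment hf hqm le_rfl
    exact ih _ (by omega) hshort

end RelWalk

theorem bmul_eq_true {a b c : ℕ} {X : Matrix (Fin a) (Fin b) Bool} {Y : Matrix (Fin b) (Fin c) Bool}
    {i : Fin a} {k : Fin c} : bmul X Y i k = true ↔ ∃ j, X i j = true ∧ Y j k = true :=
  Finset.sup_eq_top_iff.trans (by simp)

theorem bsum_eq_true {a b N : ℕ} {f : ℕ → Matrix (Fin a) (Fin b) Bool} {i : Fin a} {j : Fin b} :
    bsum N f i j = true ↔ ∃ s < N, f s i j = true :=
  Finset.sup_eq_top_iff.trans (by simp)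

section kterm

variable {nu ny : ℕ} {K : Matrix (Fin nu) (Fin ny) Bool} {G : Matrix (Fin ny) (Fin nu) Bool}

theorem kterm_eq_true_iff_relWalk_GK {s : ℕ} {i : Fin nu} {j : Fin ny} :
    kterm K G s i j = true ↔
      ∃ y, K i y = true ∧ RelWalk (fun y y' => bmul G K y y' = true) s y j := by
  induction s generalizing j with
  | zero => simp [kterm, RelWalk.zero_iff]
  | succ s ih =>
    simp only [kterm, bmul_eq_true (X := kterm K G s), ih, RelWalk.succ_iff]
    aesop

theorem kterm_eq_true_iff_relWalk_KG {s : ℕ} {i : Fin nu} {j : Fin ny} :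
    kterm K G s i j = true ↔
      ∃ u, RelWalk (fun u u' => bmul K G u u' = true) s i u ∧ K u j = true := by
  induction s generalizing j with
  | zero => simp [kterm, RelWalk.zero_iff]
  | succ s ih =>
    simp only [kterm, bmul_eq_true, ih, RelWalk.succ_iff]
    aesop

theorem kterm_add_add_one_s9 {s t : ℕ} {i : Fin nu} {w : Fin ny} {v : Fin nu} {j : Fin ny}
    (hs : kterm K G s i w = true) (hG : G w v = true) (ht : kterm K G t v j = true) :
    kterm K G (s + 1 + t) i j = true := by
  obtain ⟨y, hiy, hyw⟩ := kterm_eq_true_iff_relWalk_GK.mp hs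
  obtain ⟨y', hvy', hy'j⟩ := kterm_eq_true_iff_relWalk_GK.mp ht
  have hwy' : RelWalk (fun y y' => bmul G K y y' = true) 1 w y' :=
    RelWalk.one_iff.mpr (bmul_eq_true.mpr ⟨v, hG, hvy'⟩)
  exact kterm_eq_true_iff_relWalk_GK.mpr
    ⟨y, hiy, RelWalk.add_iff.mpr ⟨y', RelWalk.add_iff.mpr ⟨w, hyw, hwy'⟩, hy'j⟩⟩

theorem exists_lt_min_kterm_eq_true {m : ℕ} {i : Fin nu} {j : Fin ny} (h : kterm K G m i j = true) :
    ∃ s < min nu ny, kterm K G s i j = true := by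
  rcases le_total nu ny with hle | hle
  · obtain ⟨u, hiu, huj⟩ := kterm_eq_true_iff_relWalk_KG.mp h
    obtain ⟨s, hs, hs'⟩ := hiu.exists_lt_card
    exact ⟨s, by simpa [hle] using hs, kterm_eq_true_iff_relWalk_KG.mpr ⟨u, hs', huj⟩⟩
  · obtain ⟨y, hiy, hyj⟩ := kterm_eq_true_iff_relWalk_GK.mp h
    obtain ⟨s, hs, hs'⟩ := hyj.exists_lt_card
    exact ⟨s, by simpa [hle] using hs, kterm_eq_true_iff_relWalk_GK.mpr ⟨y, hiy, hs'⟩⟩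

end kterm

theorem stmt9_general {nu ny : ℕ} (K : Matrix (Fin nu) (Fin ny) Bool)
    (G : Matrix (Fin ny) (Fin nu) Bool) :
    ∀ i j, bmul (bmul (bsum (min nu ny) (kterm K G)) G) (bsum (min nu ny) (kterm K G)) i j ≤
      bsum (min nu ny) (kterm K G) i j := by
  intro i j
  refine Bool.le_iff_imp.mpr fun h => ?_
  obtain ⟨v, hiv, hvj⟩ := bmul_eq_true.mp h
  obtain ⟨w, hiw, hwv⟩ := bmul_eq_true.mp hiv
  obtain ⟨s, -, hs⟩ := bsum_eq_true.mp hiw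
  obtain ⟨t, -, ht⟩ := bsum_eq_true.mp hvj
  obtain ⟨r, hr, hrij⟩ := exists_lt_min_kterm_eq_true (kterm_add_add_one_s9 hs hwv ht)
  exact bsum_eq_true.mpr ⟨r, hr, hrij⟩

theorem stmt9 {nu ny : ℕ} (K : Matrix (Fin nu) (Fin ny) Bool)
    (G : Matrix (Fin ny) (Fin nu) Bool) (hn : 1 ≤ min nu ny) :
    ∀ i j, bmul (bmul (bsum (min nu ny) (kterm K G)) G) (bsum (min nu ny) (kterm K G)) i j ≤
      bsum (min nu ny) (kterm K G) i j :=
  stmt9_general K G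
end
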